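/- The sequence π_opt(G_{n×n})/n² converges as n → ∞, where π_opt denotes the optimal pebbling number of the n×n grid graph. -/

import Mathlib

/-- A pebbling move: remove two pebbles from `u`, add one pebble at a neighbour `v`. -/
def PebblingMove {V : Type*} [DecidableEq V] (G : SimpleGraph V) (D D' : V → ℕ) : Prop :=
  ∃ u v, G.Adj u v ∧ 2 ≤ D u ∧
    D' = Function.update (Function.update D u (D u - 2)) v (D v + 1)

/-- `t` is reachable under `D`: some sequence of pebbling moves puts a pebble on `t`. -/
def PebbleReachable {V : Type*} [DecidableEq V] (G : SimpleGraph V) (D : V → ℕ) (t : V) : Prop :=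
  ∃ D', Relation.ReflTransGen (PebblingMove G) D D' ∧ 1 ≤ D' t

/-- `D` is solvable if every vertex is reachable under it. -/
def SolvableDistr {V : Type*} [DecidableEq V] (G : SimpleGraph V) (D : V → ℕ) : Prop :=
  ∀ t, PebbleReachable G D t

/-- The `r × c` grid graph. -/
def fgrid (r c : ℕ) : SimpleGraph (Fin r × Fin c) where
  Adj p q := ((p.1 : ℤ) - q.1).natAbs + ((p.2 : ℤ) - q.2).natAbs = 1
  symm := ⟨by intro p q h; omega⟩
  loopless := ⟨by intro p h; simp at h⟩

/-- Optimal pebbling number of the `n × n` grid. -/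
noncomputable def piOpt (n : ℕ) : ℕ :=
  sInf {s : ℕ | ∃ D : Fin n × Fin n → ℕ, SolvableDistr (fgrid n n) D ∧ ∑ v, D v = s}

/-!
Cover `G_{n×n}` by `(⌊n/m⌋ + 1)²` translated copies of `G_{m×m}` (the last row and column of
copies pushed back to fit) and put an optimal distribution on each copy. Moves inside a copy are
moves of the big grid and extra pebbles never hurt, so `π_opt(n) ≤ (⌊n/m⌋ + 1)² π_opt(m)`.
Hence `a n := π_opt(n) / n²` satisfies `a n ≤ a m (1 + m/n)²` for `m ≤ n`, so
`limsup a ≤ a m` for every `m`, and, as in Fekete's lemma, `a` converges to `inf a`.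
-/

open Filter Topology

theorem Function.Injective.extend_update {α β γ : Type*} [DecidableEq α] [DecidableEq β]
    {φ : α → β} (hφ : φ.Injective) (f : α → γ) (g : β → γ) (u : α) (c : γ) :
    Function.extend φ (Function.update f u c) g =
      Function.update (Function.extend φ f g) (φ u) c := by
  funext v
  by_cases hv : ∃ x, φ x = v
  · obtain ⟨x, rfl⟩ := hv
    simp only [hφ.extend_apply, Function.update_apply, hφ.eq_iff]
  · rw [Function.update_of_ne (fun h => hv ⟨u, h.symm⟩), Function.extend_apply' _ _ _ hv,
      Function.extend_apply' _ _ _ hv]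

theorem Function.Injective.sum_extend_zero {α β M : Type*} [Fintype α] [Fintype β]
    [AddCommMonoid M] [TopologicalSpace M] [T2Space M] {φ : α → β} (hφ : φ.Injective)
    (f : α → M) : ∑ v, Function.extend φ f 0 v = ∑ x, f x :=
  (hasSum_fintype _).unique ((hasSum_extend_zero hφ).2 (hasSum_fintype f))

section Pebbling

variable {V W : Type*} [DecidableEq V] [DecidableEq W] {G : SimpleGraph V} {H : SimpleGraph W}

theorem PebblingMove.exists_of_le {D E D' : V → ℕ} (h : PebblingMove G D E) (hle : D ≤ D') :
    ∃ E', PebblingMove G D' E' ∧ E ≤ E' := by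
  obtain ⟨u, v, huv, hu, rfl⟩ := h
  refine ⟨_, ⟨u, v, huv, hu.trans (hle u), rfl⟩, fun w => ?_⟩
  have hu' : D u ≤ D' u := hle u
  have hv' : D v ≤ D' v := hle v
  have hw' : D w ≤ D' w := hle w
  by_cases hv : w = v <;> by_cases hw : w = u <;>
    simp only [Function.update_apply, hv, hw, G.ne_of_adj huv, if_true, if_false] <;> omega

theorem PebblingMove.reflTransGen_exists_of_le {D E D' : V → ℕ}
    (h : Relation.ReflTransGen (PebblingMove G) D E) (hle : D ≤ D') :
    ∃ E', Relation.ReflTransGen (PebblingMove G) D' E' ∧ E ≤ E' := by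
  induction h with
  | refl => exact ⟨D', .refl, hle⟩
  | tail _ hstep ih =>
    obtain ⟨E', hE', hle'⟩ := ih
    obtain ⟨F', hF', hle''⟩ := hstep.exists_of_le hle'
    exact ⟨F', hE'.tail hF', hle''⟩

theorem PebbleReachable.mono {D D' : V → ℕ} {t : V} (h : PebbleReachable G D t) (hle : D ≤ D') :
    PebbleReachable G D' t := by
  obtain ⟨E, hE, ht⟩ := h
  obtain ⟨E', hE', hle'⟩ := PebblingMove.reflTransGen_exists_of_le hE hle
  exact ⟨E', hE', ht.trans (hle' t)⟩

theorem PebblingMove.extend {D E : V → ℕ} (φ : G →g H) (hφ : Function.Injective φ)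
    (h : PebblingMove G D E) :
    PebblingMove H (Function.extend φ D 0) (Function.extend φ E 0) := by
  obtain ⟨u, v, huv, hu, rfl⟩ := h
  refine ⟨φ u, φ v, φ.map_adj huv, by rwa [hφ.extend_apply], ?_⟩
  rw [hφ.extend_update, hφ.extend_update, hφ.extend_apply, hφ.extend_apply]

theorem PebbleReachable.extend {D : V → ℕ} {t : V} (φ : G →g H) (hφ : Function.Injective φ)
    (h : PebbleReachable G D t) : PebbleReachable H (Function.extend φ D 0) (φ t) := by
  obtain ⟨E, hE, ht⟩ := h
  exact ⟨_, hE.lift (fun D : V → ℕ => Function.extend φ D (0 : W → ℕ))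
    (fun _ _ => PebblingMove.extend φ hφ), (hφ.extend_apply E 0 t).ge.trans' ht⟩

theorem SolvableDistr.sum_extend {ι : Type*} [Fintype ι] {D : V → ℕ} (hD : SolvableDistr G D)
    (φ : ι → G →g H) (hφ : ∀ i, Function.Injective (φ i))
    (hcover : ∀ w, ∃ i v, φ i v = w) :
    SolvableDistr H (∑ i, Function.extend (φ i) D (0 : W → ℕ)) := by
  intro w
  obtain ⟨i, v, rfl⟩ := hcover w
  exact ((hD v).extend (φ i) (hφ i)).mono <|
    Finset.single_le_sum (f := fun i => Function.extend (φ i) D (0 : W → ℕ))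
      (fun _ _ _ => Nat.zero_le _) (Finset.mem_univ i)

end Pebbling

theorem sum_sum_extend_zero {ι V W : Type*} [Fintype ι] [Fintype V] [Fintype W]
    (φ : ι → V → W) (hφ : ∀ i, Function.Injective (φ i)) (D : V → ℕ) :
    ∑ w, (∑ i, Function.extend (φ i) D (0 : W → ℕ)) w = Fintype.card ι * ∑ v, D v := by
  simp only [Finset.sum_apply]
  rw [Finset.sum_comm]
  simp [(hφ _).sum_extend_zero]

def fgrid.translate {r c r' c' : ℕ} (a b : ℕ) (ha : a + r ≤ r') (hb : b + c ≤ c') :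
    fgrid r c →g fgrid r' c' where
  toFun p := (⟨a + p.1, by omega⟩, ⟨b + p.2, by omega⟩)
  map_rel' := by
    intro p q h
    simp only [fgrid] at h ⊢
    omega

theorem fgrid.translate_injective {r c r' c' : ℕ} (a b : ℕ) (ha : a + r ≤ r')
    (hb : b + c ≤ c') : Function.Injective (fgrid.translate a b ha hb) := by
  intro p q h
  simp only [fgrid.translate, RelHom.coeFn_mk, Prod.ext_iff, Fin.ext_iff] at h ⊢
  omega

def blockStart (m n i : ℕ) : ℕ := min (i * m) (n - m)

theorem exists_blockStart_le_lt {m n x : ℕ} (hm : 0 < m) (hx : x < n) :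
    ∃ i < n / m + 1, blockStart m n i ≤ x ∧ x < blockStart m n i + m := by
  refine ⟨x / m, Nat.lt_succ_of_le (Nat.div_le_div_right hx.le), ?_⟩
  have := Nat.mod_add_div' x m
  have := Nat.mod_lt x hm
  unfold blockStart
  omega

theorem exists_solvableDistr_sum_eq_piOpt (n : ℕ) :
    ∃ D : Fin n × Fin n → ℕ, SolvableDistr (fgrid n n) D ∧ ∑ v, D v = piOpt n :=
  Nat.sInf_mem (s := {s | ∃ D, SolvableDistr (fgrid n n) D ∧ ∑ v, D v = s})
    ⟨_, fun _ => 1, fun _ => ⟨_, .refl, le_rfl⟩, rfl⟩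

theorem piOpt_le_mul {m n : ℕ} (hm : 0 < m) (hmn : m ≤ n) :
    piOpt n ≤ (n / m + 1) ^ 2 * piOpt m := by
  obtain ⟨D, hD, hsum⟩ := exists_solvableDistr_sum_eq_piOpt m
  have hfit (i : ℕ) : blockStart m n i + m ≤ n := by unfold blockStart; omega
  let φ (ij : Fin (n / m + 1) × Fin (n / m + 1)) : fgrid m m →g fgrid n n :=
    fgrid.translate (blockStart m n ij.1) (blockStart m n ij.2) (hfit _) (hfit _)
  have hφ (ij) : Function.Injective (φ ij) := fgrid.translate_injective _ _ _ _
  have hcover (w : Fin n × Fin n) : ∃ ij v, φ ij v = w := by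
    obtain ⟨i, hi, hix, hxi⟩ := exists_blockStart_le_lt hm w.1.2
    obtain ⟨j, hj, hjy, hyj⟩ := exists_blockStart_le_lt hm w.2.2
    refine ⟨(⟨i, hi⟩, ⟨j, hj⟩), (⟨w.1 - blockStart m n i, by omega⟩,
      ⟨w.2 - blockStart m n j, by omega⟩), ?_⟩
    simp only [φ, fgrid.translate, RelHom.coeFn_mk, Prod.ext_iff, Fin.ext_iff]
    omega
  calc piOpt n ≤ ∑ w, (∑ ij, Function.extend (φ ij) D (0 : Fin n × Fin n → ℕ)) w :=
        Nat.sInf_le ⟨_, hD.sum_extend φ hφ hcover, rfl⟩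
    _ = (n / m + 1) ^ 2 * piOpt m := by
        rw [sum_sum_extend_zero (fun ij => φ ij) hφ, hsum]
        simp [sq]

theorem tendsto_iInf_of_eventually_le_mul {a : ℕ → ℝ} {c : ℕ → ℕ → ℝ} (ha : ∀ n, 0 ≤ a n)
    (hc : ∀ m, Tendsto (c m) atTop (𝓝 1)) (hle : ∀ m, 0 < m → ∀ᶠ n in atTop, a n ≤ a m * c m n) :
    Tendsto a atTop (𝓝 (⨅ m, a (m + 1))) := by
  have hbdd : BddBelow (Set.range fun m => a (m + 1)) := ⟨0, by rintro _ ⟨m, rfl⟩; exact ha _⟩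
  refine tendsto_order.2 ⟨fun b hb => ?_, fun b hb => ?_⟩
  · filter_upwards [eventually_ge_atTop 1] with n hn
    obtain ⟨k, rfl⟩ := Nat.exists_eq_add_of_le' hn
    exact hb.trans_le (ciInf_le hbdd k)
  · obtain ⟨m, hm⟩ := exists_lt_of_ciInf_lt hb
    have hlim : Tendsto (fun n => a (m + 1) * c (m + 1) n) atTop (𝓝 (a (m + 1))) := by
      simpa using (hc (m + 1)).const_mul (a (m + 1))
    filter_upwards [hle (m + 1) m.succ_pos, hlim.eventually (gt_mem_nhds hm)] with n h1 h2
    exact h1.trans_lt h2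

theorem piOpt_div_sq_le_mul {m n : ℕ} (hm : 0 < m) (hmn : m ≤ n) :
    (piOpt n : ℝ) / n ^ 2 ≤ (piOpt m : ℝ) / m ^ 2 * (1 + m / n) ^ 2 := by
  have hm' : (0 : ℝ) < m := by exact_mod_cast hm
  have hn' : (0 : ℝ) < n := hm'.trans_le (by exact_mod_cast hmn)
  have hdiv : ((n / m : ℕ) : ℝ) + 1 ≤ n / m + 1 := by gcongr; exact Nat.cast_div_le
  calc (piOpt n : ℝ) / n ^ 2 ≤ (((n / m : ℕ) : ℝ) + 1) ^ 2 * piOpt m / n ^ 2 := by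
        gcongr; exact_mod_cast piOpt_le_mul hm hmn
    _ ≤ ((n / m : ℝ) + 1) ^ 2 * piOpt m / n ^ 2 := by gcongr
    _ = (piOpt m : ℝ) / m ^ 2 * (1 + m / n) ^ 2 := by field_simp

theorem piOpt_div_sq_converges :
    ∃ L : ℝ, Filter.Tendsto (fun n : ℕ => (piOpt n : ℝ) / (n : ℝ) ^ 2)
      Filter.atTop (nhds L) := by
  have hc (m : ℕ) : Tendsto (fun n : ℕ => (1 + (m : ℝ) / n) ^ 2) atTop (𝓝 1) := by
    simpa using ((tendsto_const_div_atTop_nhds_zero_nat (m : ℝ)).const_add 1).pow 2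
  refine ⟨_, tendsto_iInf_of_eventually_le_mul (fun n => by positivity) hc fun m hm => ?_⟩
  filter_upwards [eventually_ge_atTop m] with n hmn
  exact piOpt_div_sq_le_mul hm hmn
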